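/- arXiv:2602.04533 — 3 statements merged into one kernel-verified Lean document; each statement's English description precedes it below -/
import Mathlib

section
/- Let A = [a_{ij}] be an n×n poset matrix (unit lower triangular, transitive Boolean matrix) and define α_i = Σ_{j=0}^{n-1} a_{ij}·2^j for each i. Then 2^i ≤ α_i < 2^{i+1} for all i, the α_i are strictly increasing, and for all i,j one has a_{ij} = 1 if and only if C(α_i, α_j) is odd. In other words, A equals the principal submatrix of the 2^n × 2^n binary Pascal matrix indexed by rows and columns α_0,...,α_{n-1}. -/
/-- Sum of a bitmask is bounded. -/
lemma sum_bitmask_lt (f : ℕ → Bool) : ∀ n : ℕ,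
    (∑ j ∈ Finset.range n, if f j then (2:ℕ) ^ j else 0) < 2 ^ n := by
  intro n
  induction n with
  | zero => simp
  | succ n ih =>
    rw [Finset.sum_range_succ]
    have h : (if f n then (2:ℕ) ^ n else 0) ≤ 2 ^ n := by split <;> simp
    have : (2:ℕ) ^ (n + 1) = 2 ^ n + 2 ^ n := by ring
    omega

/-- testBit of a bitmask sum. -/
lemma testBit_sum_bitmask (f : ℕ → Bool) : ∀ n m : ℕ,
    (∑ j ∈ Finset.range n, if f j then (2:ℕ) ^ j else 0).testBit m
      = (decide (m < n) && f m) := by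
  intro n
  induction n with
  | zero => simp
  | succ n ih =>
    intro m
    rw [Finset.sum_range_succ]
    have heq : (∑ j ∈ Finset.range n, if f j then (2:ℕ) ^ j else 0)
        + (if f n then (2:ℕ) ^ n else 0)
        = 2 ^ n * (f n).toNat + (∑ j ∈ Finset.range n, if f j then (2:ℕ) ^ j else 0) := by
      cases f n <;> simp [Nat.add_comm]
    rw [heq, Nat.testBit_two_pow_mul_add _ (sum_bitmask_lt f n) m]
    split
    · rename_i h
      rw [ih m]
      simp [h, Nat.lt_succ_of_lt h]
    · rename_i h
      rw [Nat.testBit_bool_toNat]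
      rcases Nat.lt_or_ge m (n+1) with hm | hm
      · have : m = n := by omega
        subst this
        simp
      · have h1 : ¬ (m - n = 0) := by omega
        have h2 : ¬ (m < n + 1) := by omega
        simp [h1, h2]

/-- A binomial coefficient is odd iff the bits of `k` are a submask of the bits of `n`. -/
lemma odd_choose_iff : ∀ n k : ℕ, Odd (n.choose k) ↔
    ∀ i, k.testBit i = true → n.testBit i = true := by
  intro n
  induction n using Nat.strong_induction_on with
  | _ n ih =>
    intro k
    rcases Nat.eq_zero_or_pos n with rfl | hn
    · rcases Nat.eq_zero_or_pos k with rfl | hk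
      · simp
      · constructor
        · intro h
          rw [Nat.choose_eq_zero_of_lt hk] at h
          simp [Nat.odd_iff] at h
        · intro h
          obtain ⟨i, hi⟩ := Nat.exists_testBit_of_ne_zero (Nat.pos_iff_ne_zero.mp hk)
          have := h i hi
          simp at this
    · haveI : Fact (Nat.Prime 2) := ⟨Nat.prime_two⟩
      have hmod := Choose.choose_modEq_choose_mod_mul_choose_div_nat (n := n) (k := k) (p := 2)
      have hodd : Odd (n.choose k) ↔
          Odd ((n % 2).choose (k % 2)) ∧ Odd ((n / 2).choose (k / 2)) := by
        rw [← Nat.odd_mul]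
        unfold Nat.ModEq at hmod
        rw [Nat.odd_iff, Nat.odd_iff, hmod]
      have hlow : Odd ((n % 2).choose (k % 2)) ↔ k % 2 ≤ n % 2 := by
        rcases Nat.mod_two_eq_zero_or_one n with h1 | h1 <;>
          rcases Nat.mod_two_eq_zero_or_one k with h2 | h2 <;>
            simp [h1, h2, Nat.choose]
      have hhigh := ih (n / 2) (Nat.div_lt_self hn one_lt_two) (k / 2)
      rw [hodd, hlow, hhigh]
      constructor
      · rintro ⟨h0, hs⟩ i hi
        cases i with
        | zero =>
          rw [Nat.testBit_zero] at hi ⊢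
          simp only [decide_eq_true_eq] at hi ⊢
          omega
        | succ i =>
          rw [Nat.testBit_add_one] at hi ⊢
          exact hs i hi
      · intro h
        constructor
        · have := h 0
          rw [Nat.testBit_zero, Nat.testBit_zero] at this
          simp only [decide_eq_true_eq] at this
          omega
        · intro i hi
          have := h (i + 1)
          rw [Nat.testBit_add_one, Nat.testBit_add_one] at this
          exact this hi

/-- For a poset matrix `A` (unit lower triangular, transitive Boolean matrix),
with `α i = Σ_j a_{ij} 2^j`, one has `2^i ≤ α i < 2^{i+1}`, `α` is strictly
increasing, and `a_{ij} = 1` iff `C(α i, α j)` is odd, i.e. `A` is the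
principal submatrix of the binary Pascal matrix of order `2^n` indexed by `α`. -/
theorem stmt7 {n : ℕ} (A : Matrix (Fin n) (Fin n) Bool)
    (hdiag : ∀ i, A i i = true)
    (hupper : ∀ i j : Fin n, i < j → A i j = false)
    (htrans : ∀ i j k, A i j = true → A j k = true → A i k = true)
    (α : Fin n → ℕ)
    (hα : ∀ i, α i = ∑ j : Fin n, if A i j = true then 2 ^ (j : ℕ) else 0) :
    (∀ i : Fin n, 2 ^ (i : ℕ) ≤ α i ∧ α i < 2 ^ ((i : ℕ) + 1)) ∧
    StrictMono α ∧
    (∀ i j : Fin n, A i j = true ↔ Odd ((α i).choose (α j))) := by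
  -- extend each row to a Boolean function on ℕ
  set g : Fin n → ℕ → Bool := fun i m => if h : m < n then A i ⟨m, h⟩ else false with hg
  have hα' : ∀ i : Fin n, α i = ∑ j ∈ Finset.range n, if g i j then (2:ℕ) ^ j else 0 := by
    intro i
    rw [hα i, ← Fin.sum_univ_eq_sum_range (fun m => if g i m then (2:ℕ) ^ m else 0)]
    apply Finset.sum_congr rfl
    intro j _
    simp [hg, j.isLt]
  have hbit : ∀ (i : Fin n) (m : ℕ), (α i).testBit m = g i m := by
    intro i m
    rw [hα' i, testBit_sum_bitmask]
    by_cases h : m < n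
    · simp [h]
    · simp [h, hg]
  have hbit' : ∀ (i j : Fin n), (α i).testBit (j : ℕ) = A i j := by
    intro i j
    rw [hbit]
    simp [hg, j.isLt]
  have hbounds : ∀ i : Fin n, 2 ^ (i : ℕ) ≤ α i ∧ α i < 2 ^ ((i : ℕ) + 1) := by
    intro i
    constructor
    · exact Nat.ge_two_pow_of_testBit (by rw [hbit' i i]; exact hdiag i)
    · apply Nat.lt_pow_two_of_testBit
      intro m hm
      rw [hbit]
      simp only [hg]
      split
      · rename_i h
        exact hupper i ⟨m, h⟩ (by simpa [Fin.lt_def] using hm)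
      · rfl
  refine ⟨hbounds, ?_, ?_⟩
  · intro i j hij
    calc α i < 2 ^ ((i : ℕ) + 1) := (hbounds i).2
      _ ≤ 2 ^ (j : ℕ) := Nat.pow_le_pow_right (by norm_num) hij
      _ ≤ α j := (hbounds j).1
  · intro i j
    rw [odd_choose_iff]
    constructor
    · intro hij m hm
      rw [hbit] at hm ⊢
      simp only [hg] at hm ⊢
      split at hm
      · rename_i h
        simp only [h, dif_pos]
        exact htrans i j ⟨m, h⟩ hij hm
      · exact absurd hm (by simp)
    · intro h
      have := h (j : ℕ) (by rw [hbit' j j]; exact hdiag j)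
      rwa [hbit' i j] at this
end

section
/- Let A = P_{2^n}[α] be the principal submatrix of the 2^n × 2^n binary Pascal matrix indexed by α = (α_0,...,α_{n-1}), and define the flip transpose A* by (A*)_{i,j} = A_{n−1−j, n−1−i}. Then A* = P_{2^n}[β] where β = (2^n−1−α_{n−1}, 2^n−1−α_{n−2}, ..., 2^n−1−α_0). -/
/-- The principal submatrix of the binary Pascal matrix indexed by `α`:
`(i,j)`-entry `C(α i, α j) mod 2`. -/
def pascSub {n : ℕ} (α : Fin n → ℕ) : Matrix (Fin n) (Fin n) ℕ :=
  fun i j => (α i).choose (α j) % 2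

/-- The flip transpose of a square matrix: `(A*)_{i,j} = A_{n−1−j, n−1−i}`. -/
def flipT {n : ℕ} {R : Type*} (A : Matrix (Fin n) (Fin n) R) :
    Matrix (Fin n) (Fin n) R :=
  fun i j => A j.rev i.rev

private lemma lucas2 (a b : ℕ) :
    Nat.choose a b % 2 = (Nat.choose (a % 2) (b % 2) * Nat.choose (a / 2) (b / 2)) % 2 := by
  have : Fact (Nat.Prime 2) := ⟨Nat.prime_two⟩
  exact Choose.choose_modEq_choose_mod_mul_choose_div_nat (p := 2)

private lemma base2 (x y : ℕ) (hx : x < 2) (hy : y < 2) :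
    Nat.choose x y % 2 = Nat.choose (1 - y) (1 - x) % 2 := by
  interval_cases x <;> interval_cases y <;> decide

private lemma key : ∀ n a b : ℕ, a < 2 ^ n → b < 2 ^ n →
    Nat.choose a b % 2 = Nat.choose (2 ^ n - 1 - b) (2 ^ n - 1 - a) % 2 := by
  intro n
  induction n with
  | zero => intro a b ha hb; interval_cases a; interval_cases b; rfl
  | succ n ih =>
    intro a b ha hb
    have ha2 : a / 2 < 2 ^ n := by omega
    have hb2 : b / 2 < 2 ^ n := by omega
    have hma : 2 ^ (n + 1) - 1 - a = 2 * (2 ^ n - 1 - a / 2) + (1 - a % 2) := by omega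
    have hmb : 2 ^ (n + 1) - 1 - b = 2 * (2 ^ n - 1 - b / 2) + (1 - b % 2) := by omega
    rw [lucas2, lucas2 (2 ^ (n + 1) - 1 - b)]
    have e1 : (2 ^ (n + 1) - 1 - b) % 2 = 1 - b % 2 := by omega
    have e2 : (2 ^ (n + 1) - 1 - b) / 2 = 2 ^ n - 1 - b / 2 := by omega
    have e3 : (2 ^ (n + 1) - 1 - a) % 2 = 1 - a % 2 := by omega
    have e4 : (2 ^ (n + 1) - 1 - a) / 2 = 2 ^ n - 1 - a / 2 := by omega
    rw [e1, e2, e3, e4, Nat.mul_mod, Nat.mul_mod (Nat.choose (1 - b % 2) (1 - a % 2)),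
      ← base2 _ _ (Nat.mod_lt _ two_pos) (Nat.mod_lt _ two_pos), ← ih _ _ ha2 hb2]

/-- The flip transpose of the Pascal submatrix indexed by `α` is the Pascal
submatrix indexed by `β` with `β i = 2^n − 1 − α (n−1−i)`. -/
theorem stmt12 {n : ℕ} (α : Fin n → ℕ) (hlt : ∀ i, α i < 2 ^ n) :
    flipT (pascSub α) = pascSub (fun i : Fin n => 2 ^ n - 1 - α i.rev) := by
  funext i j
  simp only [flipT, pascSub]
  exact key n (α j.rev) (α i.rev) (hlt _) (hlt _)
end

section
/- The number of Boolean vectors x ∈ {0,1}^n satisfying x P_n = x over the Boolean semiring equals the number of antichains of the Pascal poset on {0,...,n−1} (order: j ⪯ i iff supp(j) ⊆ supp(i)); in particular, for n = 5 this number is 11. -/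
/-- Boolean row-vector–matrix product over the Boolean semiring. -/
noncomputable def vecMulB {n : ℕ} (x : Fin n → Bool)
    (A : Matrix (Fin n) (Fin n) Bool) : Fin n → Bool :=
  fun j => Finset.univ.sup fun i => x i && A i j

/-- The `n × n` binary Pascal matrix over `Bool`. -/
def pascalB (n : ℕ) : Matrix (Fin n) (Fin n) Bool :=
  fun i j => decide ((i : ℕ).choose (j : ℕ) % 2 = 1)

/-- Bitwise domination, in computable form. -/
def Rb {n : ℕ} (j i : Fin n) : Prop := (j : ℕ) &&& (i : ℕ) = (j : ℕ)

instance {n : ℕ} : DecidableRel (Rb (n := n)) := fun _ _ => Nat.decEq _ _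

lemma Rb_iff {n : ℕ} (j i : Fin n) :
    Rb j i ↔ ∀ b, (j : ℕ).testBit b = true → (i : ℕ).testBit b = true := by
  constructor
  · intro h b hb
    have := congrArg (Nat.testBit · b) h
    simp only [Nat.testBit_and, hb, Bool.true_and] at this
    exact this
  · intro h
    apply Nat.eq_of_testBit_eq
    intro b
    rw [Nat.testBit_and]
    cases hj : (j : ℕ).testBit b
    · simp
    · simp [h b hj]

lemma Rb_refl {n : ℕ} (j : Fin n) : Rb j j := Nat.and_self _

lemma Rb_trans {n : ℕ} {a b c : Fin n} (h1 : Rb a b) (h2 : Rb b c) : Rb a c := by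
  rw [Rb_iff] at *
  exact fun k hk => h2 k (h1 k hk)

lemma Rb_antisymm {n : ℕ} {a b : Fin n} (h1 : Rb a b) (h2 : Rb b a) : a = b := by
  rw [Rb_iff] at h1 h2
  apply Fin.ext
  apply Nat.eq_of_testBit_eq
  intro k
  cases ha : (a : ℕ).testBit k
  · cases hb : (b : ℕ).testBit k
    · rfl
    · exact absurd (h2 k hb) (by simp [ha])
  · rw [h1 k ha]

/-- Lucas' theorem mod 2. -/
lemma choose_odd_iff (i j : ℕ) :
    i.choose j % 2 = 1 ↔ ∀ b, j.testBit b = true → i.testBit b = true := by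
  induction i using Nat.strong_induction_on generalizing j with
  | _ i ih =>
    rcases Nat.eq_zero_or_pos i with hi | hi
    · subst hi
      cases j with
      | zero => simp
      | succ k =>
        simp only [Nat.choose_zero_succ]
        constructor
        · intro h; omega
        · intro h
          obtain ⟨b, hb, -⟩ := Nat.exists_most_significant_bit (n := k + 1) (by omega)
          have := h b hb
          simp [Nat.zero_testBit] at this
    · haveI : Fact (Nat.Prime 2) := ⟨Nat.prime_two⟩
      have h := Choose.choose_modEq_choose_mod_mul_choose_div_nat (n := i) (k := j) (p := 2)
      rw [Nat.ModEq] at h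
      have hdiv := ih (i / 2) (Nat.div_lt_self hi one_lt_two) (j / 2)
      have hmul : i.choose j % 2 = 1 ↔
          (i % 2).choose (j % 2) % 2 = 1 ∧ (i / 2).choose (j / 2) % 2 = 1 := by
        rw [h, ← Nat.odd_iff, Nat.odd_mul, Nat.odd_iff, Nat.odd_iff]
      have hlow : (i % 2).choose (j % 2) % 2 = 1 ↔
          (j.testBit 0 = true → i.testBit 0 = true) := by
        rcases Nat.mod_two_eq_zero_or_one i with h1 | h1 <;>
          rcases Nat.mod_two_eq_zero_or_one j with h2 | h2 <;>
            simp [h1, h2, Nat.testBit_zero]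
      have hsplit : (∀ b, j.testBit b = true → i.testBit b = true) ↔
          ((j.testBit 0 = true → i.testBit 0 = true) ∧
            ∀ b, (j / 2).testBit b = true → (i / 2).testBit b = true) := by
        constructor
        · intro hh
          refine ⟨hh 0, fun b hb => ?_⟩
          rw [Nat.testBit_div_two]
          exact hh (b + 1) (by rwa [Nat.testBit_div_two] at hb)
        · rintro ⟨h0, hs⟩ b hb
          cases b with
          | zero => exact h0 hb
          | succ b =>
            rw [Nat.testBit_succ]
            exact hs b (by rwa [Nat.testBit_succ] at hb)
      rw [hmul, hlow, hdiv, hsplit]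

lemma pascalB_eq_true_iff {n : ℕ} (i j : Fin n) :
    pascalB n i j = true ↔ Rb j i := by
  rw [pascalB, decide_eq_true_iff, choose_odd_iff, Rb_iff]

lemma sup_bool_eq_true_iff {n : ℕ} (f : Fin n → Bool) :
    Finset.univ.sup f = true ↔ ∃ i, f i = true := by
  constructor
  · intro h
    by_contra hc
    push_neg at hc
    have : Finset.univ.sup f = (⊥ : Bool) := by
      rw [Finset.sup_eq_bot_iff]
      intro s _
      cases hs : f s
      · rfl
      · exact absurd hs (hc s)
    rw [this] at h
    exact Bool.false_ne_true h
  · rintro ⟨i, hi⟩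
    have h1 : f i ≤ Finset.univ.sup f := Finset.le_sup (Finset.mem_univ i)
    rw [hi] at h1
    exact le_antisymm (Bool.le_true _) h1

/-- A Finset is a down-set for `Rb`. -/
def DownSet {n : ℕ} (S : Finset (Fin n)) : Prop :=
  ∀ i ∈ S, ∀ j : Fin n, Rb j i → j ∈ S

instance {n : ℕ} : DecidablePred (DownSet (n := n)) := fun _ => by
  unfold DownSet; infer_instance

lemma fixed_iff_downSet {n : ℕ} (x : Fin n → Bool) :
    vecMulB x (pascalB n) = x ↔
      ∀ i : Fin n, x i = true → ∀ j : Fin n, Rb j i → x j = true := by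
  constructor
  · intro hx i hi j hji
    have : vecMulB x (pascalB n) j = true := by
      rw [vecMulB, sup_bool_eq_true_iff]
      exact ⟨i, by rw [hi, (pascalB_eq_true_iff i j).2 hji, Bool.and_self]⟩
    rwa [hx] at this
  · intro hd
    funext j
    rw [vecMulB]
    cases hj : x j
    · have : ∀ i : Fin n, (x i && pascalB n i j) = false := by
        intro i
        cases hxi : x i
        · simp
        · cases hp : pascalB n i j
          · simp
          · exact absurd (hd i hxi j ((pascalB_eq_true_iff i j).1 hp)) (by simp [hj])
      calc Finset.univ.sup (fun i => x i && pascalB n i j) = (⊥ : Bool) := by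
            rw [Finset.sup_eq_bot_iff]; exact fun s _ => this s
        _ = false := rfl
    · rw [sup_bool_eq_true_iff]
      exact ⟨j, by rw [hj, (pascalB_eq_true_iff j j).2 (Rb_refl j), Bool.and_self]⟩

/-- The maximal elements of a finset. -/
def maxSet {n : ℕ} (S : Finset (Fin n)) : Finset (Fin n) :=
  S.filter (fun i => ∀ k ∈ S, Rb i k → k = i)

lemma exists_max {n : ℕ} (S : Finset (Fin n)) :
    ∀ j ∈ S, ∃ i ∈ maxSet S, Rb j i := by
  have key : ∀ c : ℕ, ∀ j ∈ S, n - (j : ℕ) ≤ c → ∃ i ∈ maxSet S, Rb j i := by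
    intro c
    induction c with
    | zero => intro j _ h; have := j.isLt; omega
    | succ c ih =>
      intro j hj hc
      by_cases hm : ∀ k ∈ S, Rb j k → k = j
      · exact ⟨j, Finset.mem_filter.mpr ⟨hj, hm⟩, Rb_refl j⟩
      · push_neg at hm
        obtain ⟨k, hk, hjk, hne⟩ := hm
        have hlt : (j : ℕ) < (k : ℕ) := by
          have hle : (j : ℕ) ≤ (k : ℕ) := by
            conv_lhs => rw [← hjk]
            exact Nat.and_le_right
          rcases hle.lt_or_eq with h | h
          · exact h
          · exact absurd (Fin.ext h) (Ne.symm hne)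
        obtain ⟨i, hi, hki⟩ := ih k hk (by have := k.isLt; omega)
        exact ⟨i, hi, Rb_trans hjk hki⟩
  exact fun j hj => key (n - (j : ℕ)) j hj le_rfl

/-- The down-set generated by a finset. -/
def genDown {n : ℕ} (A : Finset (Fin n)) : Finset (Fin n) :=
  Finset.univ.filter (fun j => ∃ i ∈ A, Rb j i)

def Antichain {n : ℕ} (S : Finset (Fin n)) : Prop :=
  ∀ i ∈ S, ∀ j ∈ S, i ≠ j →
    ¬ ∀ b, (j : ℕ).testBit b = true → (i : ℕ).testBit b = true

lemma antichain_maxSet {n : ℕ} (S : Finset (Fin n)) : Antichain (maxSet S) := by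
  intro i hi j hj hne hR
  rw [← Rb_iff] at hR
  rw [maxSet, Finset.mem_filter] at hi hj
  exact hne (hj.2 i hi.1 hR)

lemma downSet_genDown {n : ℕ} (A : Finset (Fin n)) : DownSet (genDown A) := by
  intro i hi j hji
  rw [genDown, Finset.mem_filter] at hi ⊢
  obtain ⟨-, a, ha, hia⟩ := hi
  exact ⟨Finset.mem_univ j, a, ha, Rb_trans hji hia⟩

lemma genDown_maxSet {n : ℕ} (S : Finset (Fin n)) (hS : DownSet S) :
    genDown (maxSet S) = S := by
  ext j
  rw [genDown, Finset.mem_filter]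
  constructor
  · rintro ⟨-, i, hi, hji⟩
    rw [maxSet, Finset.mem_filter] at hi
    exact hS i hi.1 j hji
  · intro hj
    obtain ⟨i, hi, hji⟩ := exists_max S j hj
    exact ⟨Finset.mem_univ j, i, hi, hji⟩

lemma maxSet_genDown {n : ℕ} (A : Finset (Fin n)) (hA : Antichain A) :
    maxSet (genDown A) = A := by
  ext i
  rw [maxSet, Finset.mem_filter, genDown, Finset.mem_filter]
  constructor
  · rintro ⟨⟨-, a, ha, hia⟩, hmax⟩
    have : a ∈ genDown A := by
      rw [genDown, Finset.mem_filter]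
      exact ⟨Finset.mem_univ a, a, ha, Rb_refl a⟩
    rw [← hmax a this hia]; exact ha
  · intro hi
    refine ⟨⟨Finset.mem_univ i, i, hi, Rb_refl i⟩, ?_⟩
    intro k hk hik
    simp only [Finset.mem_filter] at hk
    obtain ⟨-, b, hb, hkb⟩ := hk
    have hib : Rb i b := Rb_trans hik hkb
    have hieq : i = b := by
      by_contra hne
      exact hA b hb i hi (Ne.symm hne) ((Rb_iff i b).1 hib)
    subst hieq
    exact Rb_antisymm hkb hik

/-- Fixed vectors correspond to down-sets. -/
noncomputable def fixedEquivDownSet (n : ℕ) :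
    {x : Fin n → Bool // vecMulB x (pascalB n) = x} ≃ {S : Finset (Fin n) // DownSet S} where
  toFun x := ⟨Finset.univ.filter (fun i => x.1 i = true), by
    intro i hi j hji
    rw [Finset.mem_filter] at hi ⊢
    exact ⟨Finset.mem_univ j, (fixed_iff_downSet x.1).1 x.2 i hi.2 j hji⟩⟩
  invFun S := ⟨fun i => decide (i ∈ S.1), by
    rw [fixed_iff_downSet]
    intro i hi j hji
    rw [decide_eq_true_iff] at hi ⊢
    exact S.2 i hi j hji⟩
  left_inv x := by
    ext i
    simp
  right_inv S := by
    ext i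
    simp

noncomputable def downSetEquivAntichain (n : ℕ) :
    {S : Finset (Fin n) // DownSet S} ≃ {S : Finset (Fin n) // Antichain S} where
  toFun S := ⟨maxSet S.1, antichain_maxSet S.1⟩
  invFun A := ⟨genDown A.1, downSet_genDown A.1⟩
  left_inv S := Subtype.ext (genDown_maxSet S.1 S.2)
  right_inv A := Subtype.ext (maxSet_genDown A.1 A.2)

/-- The number of Boolean vectors with `x P_n = x` equals the number of
antichains of the Pascal poset on `{0,…,n−1}` (order: `j ⪯ i` iff
`supp j ⊆ supp i`); in particular for `n = 5` this number is `11`. -/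
theorem stmt17 :
    (∀ n : ℕ,
      Nat.card {x : Fin n → Bool // vecMulB x (pascalB n) = x} =
      Nat.card {S : Finset (Fin n) // ∀ i ∈ S, ∀ j ∈ S, i ≠ j →
        ¬ ∀ b, (j : ℕ).testBit b = true → (i : ℕ).testBit b = true}) ∧
    Nat.card {x : Fin 5 → Bool // vecMulB x (pascalB 5) = x} = 11 := by
  have main : ∀ n : ℕ,
      Nat.card {x : Fin n → Bool // vecMulB x (pascalB n) = x} =
      Nat.card {S : Finset (Fin n) // Antichain S} := by
    intro n
    exact Nat.card_congr ((fixedEquivDownSet n).trans (downSetEquivAntichain n))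
  refine ⟨main, ?_⟩
  have h5 : Nat.card {x : Fin 5 → Bool // vecMulB x (pascalB 5) = x} =
      Nat.card {S : Finset (Fin 5) // DownSet S} :=
    Nat.card_congr (fixedEquivDownSet 5)
  rw [h5, Nat.card_eq_fintype_card]
  decide
end
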